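/- Let (X,d) be a doubling metric space with doubling constant D ≥ 1. For every ε, t > 0 there exists δ₀ = δ₀(ε,D,t) > 0 such that for all δ ∈ (0,δ₀]: every δ-separated (δ,t,C)-set P ⊂ B(x₀,1) ⊂ X can be partitioned into N ≤ C·|P|·δ^{t−ε} disjoint subsets P₁,…,P_N, each of which is a Katz–Tao (δ,t,1)-set. -/

import Mathlib

open Metric Set MeasureTheory
open scoped ENNReal NNReal

noncomputable section

/-- The plane `ℝ²`. -/
abbrev E2 := EuclideanSpace ℝ (Fin 2)

/-- The `δ`-covering number of a set `A`: the least number of closed balls of radius `δ`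
needed to cover `A`. -/
noncomputable def covNum {X : Type*} [PseudoMetricSpace X] (δ : ℝ) (A : Set X) : ℕ :=
  sInf {n | ∃ S : Finset X, S.card = n ∧ A ⊆ ⋃ x ∈ S, closedBall x δ}

/-- `P` is a `(δ,s,C)`-set: `|P ∩ B(x,r)|_δ ≤ C r^s |P|_δ` for all `x` and `r ≥ δ`. -/
def IsDeltaSet {X : Type*} [PseudoMetricSpace X] (δ s C : ℝ) (P : Set X) : Prop :=
  ∀ (x : X) (r : ℝ), δ ≤ r →
    (covNum δ (P ∩ closedBall x r) : ℝ) ≤ C * r ^ s * (covNum δ P : ℝ)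

/-- `P` is `δ`-separated. -/
def IsSep {X : Type*} [PseudoMetricSpace X] (δ : ℝ) (P : Set X) : Prop :=
  ∀ x ∈ P, ∀ y ∈ P, x ≠ y → δ ≤ dist x y

/-- A metric space is doubling with constant `D`: every closed ball of radius `r` can be
covered by `D` closed balls of radius `r/2`. -/
def IsDoubling (X : Type*) [MetricSpace X] (D : ℕ) : Prop :=
  ∀ (x : X) (r : ℝ), 0 < r →
    ∃ S : Finset X, S.card ≤ D ∧ closedBall x r ⊆ ⋃ y ∈ S, closedBall y (r / 2)

/-- A `δ`-separated set `P` is a Katz–Tao `(δ,s,C)`-set if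
`|P ∩ B(x,r)| ≤ C (r/δ)^s` for all `x` and `r ≥ δ`. -/
def IsKatzTao {X : Type*} [MetricSpace X] (δ s C : ℝ) (P : Set X) : Prop :=
  IsSep δ P ∧ ∀ (x : X) (r : ℝ), δ ≤ r →
    (Nat.card ↥(P ∩ closedBall x r) : ℝ) ≤ C * (r / δ) ^ s


/-!
Peel greedily: repeatedly remove from `P` a maximal Katz–Tao `(δ,t,1)`-subset, and let `p` be a
point of the last part. Each earlier part `Q` stops being Katz–Tao when `p` is added, so some ball
`B(p, 2^(n+2) δ)` with `2^n ≤ δ⁻¹` contains at least `2^(nt)/2` points of `Q`. The parts are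
disjoint, while doubling and the `(δ,t,C)`-condition give
`|P ∩ B(p, 2^(n+2) δ)| ≤ D² C (2^(n+2) δ)^t |P|`; hence each of the `O(log δ⁻¹)` dyadic scales
serves at most `2 · 4^t D² C δ^t |P|` parts, and the logarithm is absorbed into `δ^(-ε)`.
-/

open Filter Topology Function Real

section Counting

variable {α ι : Type*}

lemma encard_le_card_mul_of_subset_biUnion {Q : Set α} {S : Finset ι} {B : ι → Set α} {m : ℕ∞}
    (hQ : Q ⊆ ⋃ i ∈ S, B i) (hB : ∀ i ∈ S, (Q ∩ B i).encard ≤ m) :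
    Q.encard ≤ S.card * m :=
  calc Q.encard = (⋃ i ∈ S, Q ∩ B i).encard := by rw [← Set.inter_iUnion₂, inter_eq_left.2 hQ]
    _ ≤ ∑ i ∈ S, (Q ∩ B i).encard := S.set_encard_biUnion_le _
    _ ≤ ∑ _i ∈ S, m := Finset.sum_le_sum hB
    _ = S.card * m := by simp

lemma sum_ncard_le_ncard_of_pairwiseDisjoint {S : Set α} (hS : S.Finite) {T : Finset ι}
    {f : ι → Set α} (hf : ∀ j ∈ T, f j ⊆ S) (hdisj : (T : Set ι).PairwiseDisjoint f) :
    ∑ j ∈ T, (f j).ncard ≤ S.ncard := by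
  rw [← finsum_mem_coe_finset,
    ← T.finite_toSet.ncard_biUnion (fun j hj => hS.subset (hf j hj)) hdisj]
  exact ncard_le_ncard (iUnion₂_subset hf) hS

end Counting

section Separated

variable {X : Type*} [PseudoMetricSpace X] {δ : ℝ} {Q : Set X}

lemma IsSep.mono {R : Set X} (hQ : IsSep δ Q) (hRQ : R ⊆ Q) : IsSep δ R :=
  fun a ha b hb => hQ a (hRQ ha) b (hRQ hb)

lemma IsSep.encard_le_card_of_subset_biUnion (hQ : IsSep δ Q) {S : Finset X} {ρ : ℝ}
    (hS : Q ⊆ ⋃ y ∈ S, closedBall y ρ) (hρ : 2 * ρ < δ) : Q.encard ≤ S.card := by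
  refine (encard_le_card_mul_of_subset_biUnion hS (m := 1) fun y _ => ?_).trans_eq (mul_one _)
  refine encard_le_one_iff.2 fun a b ha hb => by_contra fun hab => ?_
  have := dist_triangle_right a b y
  linarith [hQ a ha.1 b hb.1 hab, mem_closedBall.1 ha.2, mem_closedBall.1 hb.2]

lemma exists_finset_card_eq_ncard_cover (hδ : 0 ≤ δ) {A : Set X} (hA : A.Finite) :
    ∃ S : Finset X, S.card = A.ncard ∧ A ⊆ ⋃ x ∈ S, closedBall x δ :=
  ⟨hA.toFinset, (ncard_eq_toFinset_card A hA).symm,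
    fun _ ha => mem_biUnion (hA.mem_toFinset.2 ha) (mem_closedBall_self hδ)⟩

lemma covNum_le_ncard (hδ : 0 ≤ δ) {A : Set X} (hA : A.Finite) : covNum δ A ≤ A.ncard :=
  Nat.sInf_le (exists_finset_card_eq_ncard_cover hδ hA)

lemma exists_finset_card_eq_covNum (hδ : 0 ≤ δ) {A : Set X} (hA : A.Finite) :
    ∃ S : Finset X, S.card = covNum δ A ∧ A ⊆ ⋃ x ∈ S, closedBall x δ :=
  Nat.sInf_mem (s := {n | ∃ S : Finset X, S.card = n ∧ A ⊆ ⋃ x ∈ S, closedBall x δ})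
    ⟨_, exists_finset_card_eq_ncard_cover hδ hA⟩

end Separated

section Doubling

variable {X : Type*} [MetricSpace X] {D : ℕ}

lemma IsDoubling.exists_finset_cover_pow (hX : IsDoubling X D) (x : X) {r : ℝ} (hr : 0 < r) :
    ∀ n : ℕ, ∃ S : Finset X, S.card ≤ D ^ n ∧ closedBall x r ⊆ ⋃ y ∈ S, closedBall y (r / 2 ^ n)
  | 0 => ⟨{x}, by simp, by simp⟩
  | n + 1 => by
    classical
    obtain ⟨S, hS, hcov⟩ := hX.exists_finset_cover_pow x hr n
    choose T hT hTcov using fun y : X => hX y (r / 2 ^ n) (by positivity)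
    refine ⟨S.biUnion T, ?_, fun z hz => ?_⟩
    · calc (S.biUnion T).card ≤ ∑ y ∈ S, (T y).card := Finset.card_biUnion_le
        _ ≤ S.card * D := by simpa using Finset.sum_le_card_nsmul S _ D fun y _ => hT y
        _ ≤ D ^ (n + 1) := by rw [pow_succ]; exact Nat.mul_le_mul_right D hS
    · obtain ⟨y, hy, hzy⟩ := mem_iUnion₂.1 (hcov hz)
      obtain ⟨w, hw, hzw⟩ := mem_iUnion₂.1 (hTcov y hzy)
      exact mem_iUnion₂.2 ⟨w, Finset.mem_biUnion.2 ⟨y, hy, hw⟩, by rwa [pow_succ, ← div_div]⟩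

variable {δ : ℝ} {Q : Set X}

lemma IsSep.encard_le_of_subset_closedBall (hX : IsDoubling X D) (hQ : IsSep δ Q) {x : X} {r : ℝ}
    (hQx : Q ⊆ closedBall x r) (hr : 0 < r) {n : ℕ} (hn : 2 * (r / 2 ^ n) < δ) :
    Q.encard ≤ D ^ n := by
  obtain ⟨S, hS, hcov⟩ := hX.exists_finset_cover_pow x hr n
  calc Q.encard ≤ S.card := hQ.encard_le_card_of_subset_biUnion (hQx.trans hcov) hn
    _ ≤ D ^ n := by exact_mod_cast hS

lemma IsSep.finite_of_subset_closedBall (hX : IsDoubling X D) (hδ : 0 < δ) (hQ : IsSep δ Q)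
    {x : X} {r : ℝ} (hQx : Q ⊆ closedBall x r) (hr : 0 < r) : Q.Finite := by
  obtain ⟨n, hn⟩ := pow_unbounded_of_one_lt (2 * r / δ) one_lt_two
  refine encard_lt_top_iff.1 ((hQ.encard_le_of_subset_closedBall hX hQx hr (n := n) ?_).trans_lt
    (WithTop.coe_lt_top _))
  rw [mul_div_assoc', div_lt_iff₀ (by positivity)]
  rw [div_lt_iff₀ hδ] at hn
  linarith

lemma IsSep.ncard_le_sq_mul_covNum (hX : IsDoubling X D) (hδ : 0 < δ) (hQ : IsSep δ Q)
    (hfin : Q.Finite) : Q.ncard ≤ D ^ 2 * covNum δ Q := by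
  obtain ⟨S, hS, hcov⟩ := exists_finset_card_eq_covNum hδ.le hfin
  have := encard_le_card_mul_of_subset_biUnion hcov fun y _ =>
    (hQ.mono inter_subset_left).encard_le_of_subset_closedBall hX inter_subset_right hδ
      (n := 2) (by linarith)
  rw [← hfin.cast_ncard_eq, hS, mul_comm] at this
  exact_mod_cast this

lemma IsDeltaSet.ncard_inter_closedBall_le {t C : ℝ} (hX : IsDoubling X D) (hδ : 0 < δ)
    (hsep : IsSep δ Q) (hfin : Q.Finite) (hQ : IsDeltaSet δ t C Q) (hC : 0 ≤ C) (x : X) {r : ℝ}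
    (hr : δ ≤ r) : ((Q ∩ closedBall x r).ncard : ℝ) ≤ D ^ 2 * C * r ^ t * Q.ncard := by
  have hcov : ((Q ∩ closedBall x r).ncard : ℝ) ≤ D ^ 2 * covNum δ (Q ∩ closedBall x r) := by
    exact_mod_cast (hsep.mono inter_subset_left).ncard_le_sq_mul_covNum hX hδ
      (hfin.inter_of_left _)
  have hQcov : (covNum δ Q : ℝ) ≤ Q.ncard := by exact_mod_cast covNum_le_ncard hδ.le hfin
  have hrt : 0 ≤ r ^ t := rpow_nonneg (hδ.le.trans hr) t
  calc ((Q ∩ closedBall x r).ncard : ℝ) ≤ D ^ 2 * (C * r ^ t * covNum δ Q) :=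
        hcov.trans (by gcongr; exact hQ x r hr)
    _ = D ^ 2 * C * r ^ t * covNum δ Q := by ring
    _ ≤ D ^ 2 * C * r ^ t * Q.ncard := by gcongr

end Doubling

section KatzTao

variable {X : Type*} [MetricSpace X] {δ t : ℝ}

lemma isKatzTao_singleton (hδ : 0 < δ) (ht : 0 ≤ t) (p : X) : IsKatzTao δ t 1 {p} := by
  refine ⟨fun x hx y hy hxy => (hxy (hx.trans hy.symm)).elim, fun x r hr => ?_⟩
  have hcard : ({p} ∩ closedBall x r).ncard ≤ 1 :=
    (ncard_le_ncard inter_subset_left (finite_singleton p)).trans_eq (ncard_singleton p)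
  rw [Nat.card_coe_set_eq, one_mul]
  exact (Nat.cast_le_one.2 hcard).trans (one_le_rpow ((one_le_div hδ).2 hr) ht)

lemma exists_maximal_isKatzTao_subset (hδ : 0 < δ) (ht : 0 ≤ t) {R : Set X} (hR : R.Finite)
    {p : X} (hp : p ∈ R) :
    ∃ Q ⊆ R, p ∈ Q ∧ IsKatzTao δ t 1 Q ∧ ∀ q ∈ R \ Q, ¬ IsKatzTao δ t 1 (insert q Q) := by
  have hfin : {Q | Q ⊆ R ∧ IsKatzTao δ t 1 Q}.Finite :=
    hR.finite_subsets.subset fun Q hQ => hQ.1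
  obtain ⟨Q, hpQ, hmax⟩ :=
    hfin.exists_le_maximal ⟨singleton_subset_iff.2 hp, isKatzTao_singleton hδ ht p⟩
  exact ⟨Q, hmax.prop.1, singleton_subset_iff.1 hpQ, hmax.prop.2,
    fun q hq hins => hq.2 (hmax.mem_of_prop_insert ⟨insert_subset hq.1 hmax.prop.1, hins⟩)⟩

/-- The partition produced by repeatedly removing a maximal Katz–Tao `(δ,t,1)`-subset. -/
structure IsGreedyKatzTaoPartition (δ t : ℝ) (P : Set X) {N : ℕ} (parts : Fin N → Set X) :
    Prop where
  iUnion_eq : ⋃ j, parts j = P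
  pairwise_disjoint : Pairwise (Disjoint on parts)
  isKatzTao : ∀ j, IsKatzTao δ t 1 (parts j)
  nonempty : ∀ j, (parts j).Nonempty
  not_isKatzTao_insert : ∀ ⦃i j⦄, i < j → ∀ p ∈ parts j, ¬ IsKatzTao δ t 1 (insert p (parts i))

lemma IsGreedyKatzTaoPartition.subset {P : Set X} {N : ℕ} {parts : Fin N → Set X}
    (h : IsGreedyKatzTaoPartition δ t P parts) (j : Fin N) : parts j ⊆ P :=
  h.iUnion_eq ▸ subset_iUnion parts j

lemma isGreedyKatzTaoPartition_empty (parts : Fin 0 → Set X) :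
    IsGreedyKatzTaoPartition δ t ∅ parts :=
  ⟨by simp, fun i => i.elim0, fun i => i.elim0, fun i => i.elim0, fun i => i.elim0⟩

lemma IsGreedyKatzTaoPartition.cons {R Q : Set X} {N : ℕ} {parts : Fin N → Set X}
    (h : IsGreedyKatzTaoPartition δ t (R \ Q) parts) (hQR : Q ⊆ R) (hQ : IsKatzTao δ t 1 Q)
    (hQne : Q.Nonempty) (hmax : ∀ q ∈ R \ Q, ¬ IsKatzTao δ t 1 (insert q Q)) :
    IsGreedyKatzTaoPartition δ t R (Fin.cons Q parts : Fin (N + 1) → Set X) where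
  iUnion_eq := by
    rw [iUnion_fin_add_one_eq_iUnion_succ]
    simpa [comp_def, h.iUnion_eq] using hQR
  pairwise_disjoint := by
    have hQdisj : ∀ j, Disjoint Q (parts j) := fun j =>
      disjoint_sdiff_right.mono_right (h.subset j)
    intro i j hij
    induction i using Fin.cases <;> induction j using Fin.cases
    · exact absurd rfl hij
    · simpa [onFun] using hQdisj _
    · simpa [onFun] using (hQdisj _).symm
    · simpa [onFun] using h.pairwise_disjoint (Fin.succ_injective _ |>.ne_iff.1 hij)
  isKatzTao := Fin.forall_fin_succ.2 ⟨hQ, h.isKatzTao⟩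
  nonempty := Fin.forall_fin_succ.2 ⟨hQne, h.nonempty⟩
  not_isKatzTao_insert := by
    intro i j hij p hp
    induction j using Fin.cases with
    | zero => exact absurd hij (Fin.not_lt_zero i)
    | succ j =>
      induction i using Fin.cases with
      | zero => exact hmax p (h.subset j hp)
      | succ i => exact h.not_isKatzTao_insert (Fin.succ_lt_succ_iff.1 hij) p hp

lemma exists_isGreedyKatzTaoPartition (hδ : 0 < δ) (ht : 0 ≤ t) {P : Set X} (hP : P.Finite) :
    ∃ (N : ℕ) (parts : Fin N → Set X), IsGreedyKatzTaoPartition δ t P parts := by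
  induction hn : P.ncard using Nat.strong_induction_on generalizing P with
  | _ n ih =>
  rcases P.eq_empty_or_nonempty with rfl | ⟨p, hp⟩
  · exact ⟨0, Fin.elim0, isGreedyKatzTaoPartition_empty _⟩
  obtain ⟨Q, hQP, hpQ, hQ, hmax⟩ := exists_maximal_isKatzTao_subset hδ ht hP hp
  have hlt : (P \ Q).ncard < n :=
    hn ▸ ncard_lt_ncard (sdiff_ssubset_left_iff.2 ⟨p, hp, hpQ⟩) hP
  obtain ⟨N, parts, h⟩ := ih _ hlt (hP.subset sdiff_subset) rfl
  exact ⟨N + 1, _, h.cons hQP hQ ⟨p, hpQ⟩ hmax⟩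

end KatzTao

section Obstruction

variable {X : Type*} [MetricSpace X] {δ t : ℝ} {Q : Set X} {p : X}

lemma IsKatzTao.exists_dense_ball_of_not_isKatzTao_insert (hQ : IsKatzTao δ t 1 Q)
    (hfin : Q.Finite) (hδ : 0 < δ) (ht : 0 ≤ t) (h : ¬ IsKatzTao δ t 1 (insert p Q)) :
    ∃ r, δ ≤ r ∧ (r / δ) ^ t ≤ 2 * (Q ∩ closedBall p (2 * r)).ncard := by
  rw [IsKatzTao, not_and_or] at h
  rcases h with hsep | hcount
  · obtain ⟨q, hq, hqp⟩ : ∃ q ∈ Q, dist q p < δ := by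
      simp only [IsSep, mem_insert_iff, not_forall, not_le] at hsep
      obtain ⟨a, ha, b, hb, hab, hd⟩ := hsep
      rcases ha with rfl | ha <;> rcases hb with rfl | hb
      · exact absurd rfl hab
      · exact ⟨b, hb, by rwa [dist_comm]⟩
      · exact ⟨a, ha, hd⟩
      · exact absurd (hQ.1 a ha b hb hab) (not_le.2 hd)
    have hpos : 0 < (Q ∩ closedBall p (2 * δ)).ncard :=
      (ncard_pos (hfin.inter_of_left _)).2 ⟨q, hq, by rw [mem_closedBall]; linarith⟩
    refine ⟨δ, le_rfl, ?_⟩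
    rw [div_self hδ.ne', one_rpow]
    have : (1 : ℝ) ≤ (Q ∩ closedBall p (2 * δ)).ncard := by exact_mod_cast hpos
    linarith
  · simp only [not_forall, not_le, one_mul, Nat.card_coe_set_eq] at hcount
    obtain ⟨x, r, hr, hbig⟩ := hcount
    have hpx : p ∈ closedBall x r := by
      by_contra hpx
      rw [insert_inter_of_notMem hpx] at hbig
      have := hQ.2 x r hr
      rw [Nat.card_coe_set_eq, one_mul] at this
      linarith
    have hins : ((insert p Q ∩ closedBall x r).ncard : ℝ) ≤ (Q ∩ closedBall x r).ncard + 1 := by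
      rw [insert_inter_of_mem hpx]; exact_mod_cast ncard_insert_le _ _
    have hball : (Q ∩ closedBall x r).ncard ≤ (Q ∩ closedBall p (2 * r)).ncard := by
      refine ncard_le_ncard (inter_subset_inter_right _ fun y hy => ?_) (hfin.inter_of_left _)
      rw [mem_closedBall] at hy hpx ⊢
      linarith [dist_triangle_right y p x]
    have hone : 1 ≤ (r / δ) ^ t := one_le_rpow ((one_le_div hδ).2 hr) ht
    have hball' : ((Q ∩ closedBall x r).ncard : ℝ) ≤ (Q ∩ closedBall p (2 * r)).ncard := by
      exact_mod_cast hball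
    have hnonempty : (1 : ℝ) ≤ (Q ∩ closedBall x r).ncard :=
      Nat.one_le_cast.2 ((Nat.cast_pos (α := ℝ)).1 (by linarith))
    exact ⟨r, hr, by linarith⟩

lemma exists_dyadic_scale (hδ : 0 < δ) (hδ1 : δ ≤ 1) (ht : 0 ≤ t) (hfin : Q.Finite)
    (hQp : Q ⊆ closedBall p 2) {r : ℝ} (hr : δ ≤ r)
    (hdense : (r / δ) ^ t ≤ 2 * (Q ∩ closedBall p (2 * r)).ncard) :
    ∃ n ≤ ⌊logb 2 δ⁻¹⌋₊, ((2 : ℝ) ^ n) ^ t ≤ 2 * (Q ∩ closedBall p (2 ^ (n + 2) * δ)).ncard := by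
  set r' := min r 1
  have hr' : δ ≤ r' := le_min hr hδ1
  obtain ⟨n, hn, hn'⟩ := exists_nat_pow_near ((one_le_div hδ).2 hr') one_lt_two
  have hr'δ : r' / δ ≤ δ⁻¹ := by
    rw [div_le_iff₀ hδ, inv_mul_cancel₀ hδ.ne']; exact min_le_right r 1
  refine ⟨n, Nat.le_floor ?_, ?_⟩
  · rw [le_logb_iff_rpow_le one_lt_two (inv_pos.2 hδ), rpow_natCast]
    exact hn.trans hr'δ
  · have hsub : Q ∩ closedBall p (2 * r) ⊆ Q ∩ closedBall p (2 ^ (n + 2) * δ) := by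
      refine fun y ⟨hy, hyr⟩ => ⟨hy, ?_⟩
      have hyr' : dist y p ≤ 2 * r' :=
        mul_min_of_nonneg r 1 zero_le_two ▸ le_min (mem_closedBall.1 hyr) (by simpa using hQp hy)
      rw [div_lt_iff₀ hδ, pow_succ] at hn'
      rw [mem_closedBall, pow_add]
      linarith
    have hcard : ((Q ∩ closedBall p (2 * r)).ncard : ℝ)
        ≤ (Q ∩ closedBall p (2 ^ (n + 2) * δ)).ncard := by
      exact_mod_cast ncard_le_ncard hsub (hfin.inter_of_left _)
    calc ((2 : ℝ) ^ n) ^ t ≤ (r / δ) ^ t := by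
          gcongr
          exact hn.trans (div_le_div_of_nonneg_right (min_le_left r 1) hδ.le)
      _ ≤ _ := hdense.trans (by linarith)

end Obstruction

section PartCount

variable {X ι : Type*} [MetricSpace X] {D : ℕ} {δ t C : ℝ} {P : Set X}

lemma card_parts_le_of_dense_at_scale (hX : IsDoubling X D) (hδ : 0 < δ) (hsep : IsSep δ P)
    (hfin : P.Finite) (hP : IsDeltaSet δ t C P) (hC : 0 ≤ C) {parts : ι → Set X} {T : Finset ι}
    (hsub : ∀ j ∈ T, parts j ⊆ P) (hdisj : (T : Set ι).PairwiseDisjoint parts) (p : X) (n : ℕ)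
    (hdense : ∀ j ∈ T,
      ((2 : ℝ) ^ n) ^ t ≤ 2 * (parts j ∩ closedBall p (2 ^ (n + 2) * δ)).ncard) :
    (T.card : ℝ) ≤ 2 * 4 ^ t * D ^ 2 * (C * δ ^ t * P.ncard) := by
  set B := closedBall p (2 ^ (n + 2) * δ)
  have hsum : ∑ j ∈ T, (parts j ∩ B).ncard ≤ (P ∩ B).ncard :=
    sum_ncard_le_ncard_of_pairwiseDisjoint (hfin.inter_of_left B)
      (fun j hj => inter_subset_inter_left B (hsub j hj)) (hdisj.mono fun j => inter_subset_left)
  have hpack : (T.card : ℝ) * ((2 : ℝ) ^ n) ^ t ≤ 2 * (P ∩ B).ncard :=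
    calc (T.card : ℝ) * ((2 : ℝ) ^ n) ^ t = ∑ j ∈ T, ((2 : ℝ) ^ n) ^ t := by simp
      _ ≤ ∑ j ∈ T, 2 * ((parts j ∩ B).ncard : ℝ) := Finset.sum_le_sum hdense
      _ = 2 * ((∑ j ∈ T, (parts j ∩ B).ncard : ℕ) : ℝ) := by push_cast; rw [Finset.mul_sum]
      _ ≤ 2 * (P ∩ B).ncard := by gcongr
  have hball := hP.ncard_inter_closedBall_le hX hδ hsep hfin hC p (r := 2 ^ (n + 2) * δ)
    (le_mul_of_one_le_left hδ.le (one_le_pow₀ one_le_two))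
  have hscale : ((2 : ℝ) ^ (n + 2) * δ) ^ t = ((2 : ℝ) ^ n) ^ t * 4 ^ t * δ ^ t := by
    rw [mul_rpow (by positivity) hδ.le, pow_add, mul_rpow (by positivity) (by positivity)]
    norm_num
  refine le_of_mul_le_mul_right ?_ (by positivity : 0 < ((2 : ℝ) ^ n) ^ t)
  calc (T.card : ℝ) * ((2 : ℝ) ^ n) ^ t ≤ 2 * (P ∩ B).ncard := hpack
    _ ≤ 2 * (D ^ 2 * C * ((2 : ℝ) ^ (n + 2) * δ) ^ t * P.ncard) := by gcongr
    _ = _ := by rw [hscale]; ring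

lemma card_parts_le_of_dense_at_some_scale (hX : IsDoubling X D) (hδ : 0 < δ)
    (hsep : IsSep δ P) (hfin : P.Finite) (hP : IsDeltaSet δ t C P) (hC : 0 ≤ C)
    {parts : ι → Set X} {T : Finset ι} (hsub : ∀ j ∈ T, parts j ⊆ P)
    (hdisj : (T : Set ι).PairwiseDisjoint parts) (p : X) (K : ℕ)
    (hdense : ∀ j ∈ T, ∃ n ≤ K,
      ((2 : ℝ) ^ n) ^ t ≤ 2 * (parts j ∩ closedBall p (2 ^ (n + 2) * δ)).ncard) :
    (T.card : ℝ) ≤ (K + 1) * (2 * 4 ^ t * D ^ 2) * (C * δ ^ t * P.ncard) := by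
  classical
  choose! scale hscaleK hscale using hdense
  have hfib := Finset.card_eq_sum_card_fiberwise (t := Finset.range (K + 1))
    fun j hj => Finset.mem_range.2 (Nat.lt_succ_of_le (hscaleK j hj))
  calc (T.card : ℝ) = ∑ n ∈ Finset.range (K + 1), ((T.filter (scale · = n)).card : ℝ) := by
        rw [hfib]; push_cast; rfl
    _ ≤ ∑ _n ∈ Finset.range (K + 1), 2 * 4 ^ t * D ^ 2 * (C * δ ^ t * P.ncard) := by
        refine Finset.sum_le_sum fun n _ => card_parts_le_of_dense_at_scale hX hδ hsep hfin hP hC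
          (fun j hj => hsub j (Finset.mem_filter.1 hj).1)
          (hdisj.subset (Finset.coe_subset.2 (Finset.filter_subset _ _))) p n fun j hj => ?_
        obtain ⟨hjT, rfl⟩ := Finset.mem_filter.1 hj
        exact hscale j hjT
    _ = (K + 1) * (2 * 4 ^ t * D ^ 2) * (C * δ ^ t * P.ncard) := by simp; ring

lemma IsGreedyKatzTaoPartition.natCast_le (hX : IsDoubling X D) (hδ : 0 < δ) (hδ1 : δ ≤ 1)
    (ht : 0 ≤ t) (hC : 0 ≤ C) {x₀ : X} (hPx₀ : P ⊆ closedBall x₀ 1) (hsep : IsSep δ P)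
    (hP : IsDeltaSet δ t C P) (hfin : P.Finite) {N : ℕ} {parts : Fin N → Set X}
    (h : IsGreedyKatzTaoPartition δ t P parts) :
    (N : ℝ) ≤ (⌊logb 2 δ⁻¹⌋₊ + 2) * (2 * 4 ^ t * D ^ 2) * (C * δ ^ t * P.ncard) := by
  rcases N with _ | n
  · simp only [CharP.cast_eq_zero]
    positivity
  obtain ⟨p, hp⟩ := h.nonempty (Fin.last n)
  have hpP := h.subset _ hp
  have hone : 1 ≤ 2 * 4 ^ t * D ^ 2 * (C * δ ^ t * P.ncard) :=
    calc (1 : ℝ) ≤ (P ∩ closedBall p δ).ncard := Nat.one_le_cast.2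
          ((ncard_pos (hfin.inter_of_left _)).2 ⟨p, hpP, mem_closedBall_self hδ.le⟩)
      _ ≤ D ^ 2 * C * δ ^ t * P.ncard := hP.ncard_inter_closedBall_le hX hδ hsep hfin hC p le_rfl
      _ = 1 * (D ^ 2 * (C * δ ^ t * P.ncard)) := by ring
      _ ≤ 2 * 4 ^ t * D ^ 2 * (C * δ ^ t * P.ncard) := by
          rw [mul_assoc _ ((D : ℝ) ^ 2)]
          gcongr
          linarith [one_le_rpow (by norm_num : (1 : ℝ) ≤ 4) ht]
  have hscales : ∀ j ∈ Finset.univ.erase (Fin.last n), ∃ k ≤ ⌊logb 2 δ⁻¹⌋₊,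
      ((2 : ℝ) ^ k) ^ t ≤ 2 * (parts j ∩ closedBall p (2 ^ (k + 2) * δ)).ncard := by
    intro j hj
    have hfin_j := hfin.subset (h.subset j)
    obtain ⟨r, hr, hdense⟩ := (h.isKatzTao j).exists_dense_ball_of_not_isKatzTao_insert hfin_j
      hδ ht (h.not_isKatzTao_insert (Fin.lt_last_iff_ne_last.2 (Finset.ne_of_mem_erase hj)) p hp)
    refine exists_dyadic_scale hδ hδ1 ht hfin_j (fun q hq => ?_) hr hdense
    have hq₀ := hPx₀ (h.subset j hq)
    have hp₀ := hPx₀ hpP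
    rw [mem_closedBall] at hq₀ hp₀ ⊢
    linarith [dist_triangle_right q p x₀]
  have hcount := card_parts_le_of_dense_at_some_scale hX hδ hsep hfin hP hC
    (fun j _ => h.subset j) (h.pairwise_disjoint.set_pairwise _) p _ hscales
  rw [Finset.card_erase_of_mem (Finset.mem_univ _), Finset.card_univ, Fintype.card_fin,
    Nat.add_sub_cancel] at hcount
  push_cast
  linarith

end PartCount

lemma eventually_floor_logb_inv_add_two_mul_le_rpow_neg {A ε : ℝ} (hA : 0 ≤ A) (hε : 0 < ε) :
    ∀ᶠ δ in 𝓝[>] 0, ((⌊logb 2 δ⁻¹⌋₊ : ℝ) + 2) * A ≤ δ ^ (-ε) := by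
  have hlim : Tendsto (fun δ => (logb 2 δ⁻¹ + 2) * δ ^ ε * A) (𝓝[>] 0) (𝓝 0) := by
    have hpow : Tendsto (fun δ : ℝ => δ ^ ε) (𝓝[>] 0) (𝓝 0) := by
      simpa [zero_rpow hε.ne'] using
        ((continuous_rpow_const hε.le).tendsto 0).mono_left nhdsWithin_le_nhds
    have := (((tendsto_log_mul_rpow_nhdsGT_zero hε).div_const (log 2)).neg.add
      (hpow.const_mul 2)).mul_const A
    convert this using 1
    · ext δ
      rw [logb, log_inv]
      ring
    · simp
  filter_upwards [hlim.eventually (eventually_le_nhds one_pos), Ioo_mem_nhdsGT one_pos]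
    with δ hle ⟨hδ, hδ1⟩
  have hlog : 0 ≤ logb 2 δ⁻¹ := logb_nonneg one_lt_two (one_le_inv₀ hδ |>.2 hδ1.le)
  calc ((⌊logb 2 δ⁻¹⌋₊ : ℝ) + 2) * A ≤ (logb 2 δ⁻¹ + 2) * A := by
        gcongr
        exact Nat.floor_le hlog
    _ ≤ δ ^ (-ε) := by
        rw [rpow_neg hδ.le, inv_eq_one_div (δ ^ ε), le_div_iff₀ (rpow_pos_of_pos hδ ε)]
        linarith

theorem partition_into_KatzTao_general (D : ℕ) (ε t : ℝ) (hε : 0 < ε) (ht : 0 < t) :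
    ∃ δ₀ : ℝ, 0 < δ₀ ∧ ∀ δ : ℝ, 0 < δ → δ ≤ δ₀ →
      ∀ (X : Type) [MetricSpace X], IsDoubling X D →
      ∀ (x₀ : X) (C : ℝ) (P : Set X), 0 < C → P ⊆ closedBall x₀ 1 → IsSep δ P →
        IsDeltaSet δ t C P →
        ∃ (N : ℕ) (parts : Fin N → Set X),
          (N : ℝ) ≤ C * (Nat.card P : ℝ) * δ ^ (t - ε) ∧
          (⋃ j, parts j) = P ∧
          Pairwise (Function.onFun Disjoint parts) ∧
          ∀ j, IsKatzTao δ t 1 (parts j) := by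
  obtain ⟨δ₀, hδ₀, hsmall⟩ := mem_nhdsGT_iff_exists_Ioc_subset.1
    ((eventually_floor_logb_inv_add_two_mul_le_rpow_neg (A := 2 * 4 ^ t * D ^ 2) (by positivity)
      hε).and (Ioo_mem_nhdsGT one_pos))
  refine ⟨δ₀, hδ₀, fun δ hδ hδδ₀ X _ hX x₀ C P hC hPx₀ hsep hP => ?_⟩
  obtain ⟨hlog, -, hδ1⟩ := hsmall ⟨hδ, hδδ₀⟩
  have hfin : P.Finite := hsep.finite_of_subset_closedBall hX hδ hPx₀ one_pos
  obtain ⟨N, parts, h⟩ := exists_isGreedyKatzTaoPartition hδ ht.le hfin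
  refine ⟨N, parts, ?_, h.iUnion_eq, h.pairwise_disjoint, h.isKatzTao⟩
  calc (N : ℝ) ≤ (⌊logb 2 δ⁻¹⌋₊ + 2) * (2 * 4 ^ t * D ^ 2) * (C * δ ^ t * P.ncard) :=
        h.natCast_le hX hδ hδ1.le ht.le hC.le hPx₀ hsep hP hfin
    _ ≤ δ ^ (-ε) * (C * δ ^ t * P.ncard) := by gcongr
    _ = C * Nat.card P * δ ^ (t - ε) := by
        rw [Nat.card_coe_set_eq, sub_eq_add_neg, rpow_add hδ]
        ring

/-- **Partition of a `(δ,t)`-set into Katz–Tao `(δ,t,1)`-sets** (Lemma 3.2 of the paper).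
In a doubling metric space, every `δ`-separated `(δ,t,C)`-set `P` in a unit ball can be
partitioned into `N ≤ C·|P|·δ^{t-ε}` Katz–Tao `(δ,t,1)`-sets, for `δ` small enough. -/
theorem partition_into_KatzTao (D : ℕ) (hD : 1 ≤ D) (ε t : ℝ) (hε : 0 < ε) (ht : 0 < t) :
    ∃ δ₀ : ℝ, 0 < δ₀ ∧ ∀ δ : ℝ, 0 < δ → δ ≤ δ₀ →
      ∀ (X : Type) [MetricSpace X], IsDoubling X D →
      ∀ (x₀ : X) (C : ℝ) (P : Set X), 0 < C → P ⊆ closedBall x₀ 1 → IsSep δ P →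
        IsDeltaSet δ t C P →
        ∃ (N : ℕ) (parts : Fin N → Set X),
          (N : ℝ) ≤ C * (Nat.card P : ℝ) * δ ^ (t - ε) ∧
          (⋃ j, parts j) = P ∧
          Pairwise (Function.onFun Disjoint parts) ∧
          ∀ j, IsKatzTao δ t 1 (parts j) :=
  partition_into_KatzTao_general D ε t hε ht
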